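/- There exists a finite simple connected graph G with at least two vertices such that μ(G) > max over all vertices v of G of (4·m_v²)/(m_v + d_v). (This disproves conjectured vertex-maximum bound 31 of Brankov, Hansen and Stevanović.) -/

import Mathlib

/-!
Let `c` be a vertex adjacent to every other vertex of a graph on `n` vertices. Then
`n • e_c - 1` is an eigenvector of the Laplacian for the eigenvalue `n`, so `μ(G) ≥ n`.
Take `c` joined to four disjoint copies of `K₅` (`n = 21`): the hub has `d = 20, m = 5` and
every other vertex `d = 5, m = 8`, so the bound is `max (4, 256 / 13) < 21 ≤ μ(G)`.
-/

noncomputable section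

open Finset

/-- The degree of a vertex, as a real number. -/
def degR {V : Type*} [Fintype V] (G : SimpleGraph V) (v : V) : ℝ :=
  letI := Classical.decRel G.Adj
  (G.degree v : ℝ)

/-- The average degree of the neighbours of a vertex, as a real number:
`m_v = (∑_{u ~ v} d_u) / d_v`. -/
def avgDegR {V : Type*} [Fintype V] (G : SimpleGraph V) (v : V) : ℝ :=
  letI := Classical.decRel G.Adj
  (∑ u ∈ G.neighborFinset v, (G.degree u : ℝ)) / (G.degree v : ℝ)

/-- The largest eigenvalue of the Laplacian matrix `L = D - A` of a finite graph. -/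
def lapSpecRad {V : Type*} [Fintype V] [DecidableEq V] [Nonempty V]
    (G : SimpleGraph V) : ℝ :=
  letI := Classical.decRel G.Adj
  ⨆ i, (SimpleGraph.posSemidef_lapMatrix ℝ G).isHermitian.eigenvalues i

open Matrix SimpleGraph

theorem Matrix.mem_spectrum_of_mulVec_eq_smul {n K : Type*} [Fintype n] [DecidableEq n] [Field K]
    {A : Matrix n n K} {μ : K} {x : n → K} (hx : x ≠ 0) (h : A *ᵥ x = μ • x) :
    μ ∈ spectrum K A := by
  rw [← Matrix.spectrum_toLin', ← Module.End.hasEigenvalue_iff_mem_spectrum]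
  exact Module.End.hasEigenvalue_of_hasEigenvector
    ⟨Module.End.mem_eigenspace_iff.2 (by simpa using h), hx⟩

namespace SimpleGraph

variable {V : Type*} {G : SimpleGraph V} [Fintype V] [DecidableRel G.Adj]

theorem degR_eq (v : V) : degR G v = G.degree v := by
  obtain rfl : ‹DecidableRel G.Adj› = Classical.decRel G.Adj := Subsingleton.elim _ _
  rfl

theorem avgDegR_eq (v : V) :
    avgDegR G v = (∑ u ∈ G.neighborFinset v, (G.degree u : ℝ)) / G.degree v := by
  obtain rfl : ‹DecidableRel G.Adj› = Classical.decRel G.Adj := Subsingleton.elim _ _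
  rfl

variable [DecidableEq V]

theorem le_lapSpecRad_of_mulVec_eq_smul [Nonempty V] {μ : ℝ} {x : V → ℝ} (hx : x ≠ 0)
    (h : G.lapMatrix ℝ *ᵥ x = μ • x) : μ ≤ lapSpecRad G := by
  obtain rfl : ‹DecidableRel G.Adj› = Classical.decRel G.Adj := Subsingleton.elim _ _
  let _ := Classical.decRel G.Adj
  have hL := (posSemidef_lapMatrix ℝ G).isHermitian
  obtain ⟨i, rfl⟩ : μ ∈ Set.range hL.eigenvalues := by
    rw [← hL.spectrum_real_eq_range_eigenvalues]
    exact mem_spectrum_of_mulVec_eq_smul hx h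
  exact le_ciSup (Set.finite_range _).bddAbove i

theorem lapMatrix_mulVec_single_of_isUniversal {c : V} (hc : G.IsUniversal c) :
    G.lapMatrix ℝ *ᵥ Pi.single c 1 = (Fintype.card V : ℝ) • Pi.single c 1 - 1 := by
  ext v
  rw [mulVec_single_one]
  obtain rfl | hv := eq_or_ne v c
  · have hn : 1 ≤ Fintype.card V := Fintype.card_pos_iff.2 ⟨v⟩
    simp [lapMatrix, degMatrix, (G.degree_eq_card_sub_one _).2 hc, Nat.cast_sub hn]
  · simp [lapMatrix, degMatrix, hv, (hc hv.symm).symm]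

theorem card_le_lapSpecRad_of_isUniversal [Nontrivial V] {c : V}
    (hc : G.IsUniversal c) : (Fintype.card V : ℝ) ≤ lapSpecRad G := by
  have : Nonempty V := ⟨c⟩
  obtain ⟨v, hv⟩ := exists_ne c
  refine le_lapSpecRad_of_mulVec_eq_smul
    (x := (Fintype.card V : ℝ) • Pi.single c 1 - 1) (fun h => ?_) ?_
  · simpa [hv] using congrFun h v
  · have hconst : G.lapMatrix ℝ *ᵥ 1 = 0 := G.lapMatrix_mulVec_const_eq_zero
    rw [mulVec_sub, mulVec_smul, lapMatrix_mulVec_single_of_isUniversal hc, hconst, sub_zero]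

end SimpleGraph

/-- Vertex `0` is the hub; vertex `i ≥ 1` lies in the `K₅` numbered `(i - 1) / 5`. -/
def hubOfFourK5 : SimpleGraph (Fin 21) where
  Adj i j := i ≠ j ∧ (i = 0 ∨ j = 0 ∨ (i.val - 1) / 5 = (j.val - 1) / 5)
  symm := ⟨fun _ _ h => ⟨h.1.symm, by tauto⟩⟩
  loopless := ⟨fun _ h => h.1 rfl⟩

instance : DecidableRel hubOfFourK5.Adj := fun i j =>
  inferInstanceAs (Decidable (i ≠ j ∧ (i = 0 ∨ j = 0 ∨ (i.val - 1) / 5 = (j.val - 1) / 5)))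

namespace hubOfFourK5

theorem isUniversal_zero : hubOfFourK5.IsUniversal 0 := by
  unfold IsUniversal
  decide

theorem degree_eq : ∀ v, hubOfFourK5.degree v = if v = 0 then 20 else 5 := by decide

theorem sum_degree_neighborFinset : ∀ v,
    ∑ u ∈ hubOfFourK5.neighborFinset v, hubOfFourK5.degree u = if v = 0 then 100 else 40 := by
  decide

end hubOfFourK5

/-- There exists a finite simple connected graph `G` with at least two vertices whose
Laplacian spectral radius exceeds the conjectured vertex-maximum bound. -/
theorem exists_counterexample_bound31 :
    ∃ (V : Type) (_ : Fintype V) (_ : DecidableEq V) (_ : Nonempty V)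
      (G : SimpleGraph V), G.Connected ∧ 2 ≤ Fintype.card V ∧
      ∀ v : V, (fun d m => 4 * m ^ 2 / (m + d)) (degR G v) (avgDegR G v) < lapSpecRad G := by
  refine ⟨Fin 21, inferInstance, inferInstance, inferInstance, hubOfFourK5,
    .of_isUniversal hubOfFourK5.isUniversal_zero, by simp, fun v => ?_⟩
  have h21 : (21 : ℝ) ≤ lapSpecRad hubOfFourK5 := by
    simpa using card_le_lapSpecRad_of_isUniversal hubOfFourK5.isUniversal_zero
  rw [degR_eq, avgDegR_eq, ← Nat.cast_sum, hubOfFourK5.sum_degree_neighborFinset,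
    hubOfFourK5.degree_eq]
  split_ifs <;> norm_num <;> linarith
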